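/- Let α > 0 and define the coefficient sequence a : ℤ₊ → ℝ by a_k = 2^{-2αn} if k = 2^n for some integer n ≥ 0, and a_k = 0 otherwise. Then Σ_{k=0}^{∞} |a_k| (1+k)^α < ∞, but Σ_{n=0}^{∞} 2^{2αn} sup_{|z|<1} |Σ_k φ_n(k) a_k z^k| = ∞. Hence the function f(z) = Σ_{n=0}^{∞} 2^{-2αn} z^{2^n} belongs to A_α(𝔻) but not to B^{2α}_{∞,1}(𝔻), so A_α(𝔻) is not contained in B^{2α}_{∞,1}(𝔻). -/

import Mathlib

open MeasureTheory

/-- The dyadic partition of unity `(φ_n)_{n ≥ 0}` on `ℤ₊`. -/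
noncomputable def dyadicPhi (n k : ℕ) : ℝ :=
  if n = 0 then (if k ≤ 1 then 1 else 0)
  else if k ≤ 2 ^ (n - 1) then 0
  else if k ≤ 2 ^ n then ((k : ℝ) - 2 ^ (n - 1)) / 2 ^ (n - 1)
  else if k ≤ 2 ^ (n + 1) then ((2 : ℝ) ^ (n + 1) - (k : ℝ)) / 2 ^ n
  else 0

/-- The coefficient sequence `a_k = 2^{-2αn}` if `k = 2^n` (some `n ≥ 0`)
and `a_k = 0` otherwise. -/
noncomputable def lacunarySeq (α : ℝ) (k : ℕ) : ℝ :=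
  if 2 ^ Nat.log 2 k = k then (2 : ℝ) ^ (-(2 * α) * (Nat.log 2 k : ℝ)) else 0

/-!
The coefficients live on the lacunary set `{2^n}`, and `φ_n` takes the value `1` at `2^n` and
vanishes at every other power of two (for `n ≥ 1`). Hence the `n`-th Littlewood–Paley block of
`f` is the single monomial `2^{-2αn} z^{2^n}`, whose supremum over the disc is `2^{-2αn}`: every
term of the Besov series with `n ≥ 1` equals `1`. The weighted Wiener norm, on the other hand,
is dominated by the geometric series `Σ 2^α 2^{-αn}`.
-/

lemma lacunarySeq_two_pow (α : ℝ) (n : ℕ) :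
    lacunarySeq α (2 ^ n) = (2 : ℝ) ^ (-(2 * α) * n) := by
  simp [lacunarySeq, Nat.log_pow one_lt_two]

lemma lacunarySeq_eq_zero_of_notMem_range (α : ℝ) {k : ℕ}
    (hk : k ∉ Set.range (2 ^ · : ℕ → ℕ)) :
    lacunarySeq α k = 0 :=
  if_neg fun h => hk ⟨Nat.log 2 k, h⟩

lemma abs_lacunarySeq_two_pow_mul_le {α : ℝ} (hα : 0 ≤ α) (n : ℕ) :
    |lacunarySeq α (2 ^ n)| * (1 + ((2 ^ n : ℕ) : ℝ)) ^ α
      ≤ 2 ^ α * ((2 : ℝ) ^ (-α)) ^ n := by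
  have hweight : (1 + ((2 ^ n : ℕ) : ℝ)) ^ α ≤ 2 ^ α * (2 : ℝ) ^ (n * α) := by
    rw [Real.rpow_natCast_mul zero_le_two, ← Real.mul_rpow zero_le_two (by positivity)]
    refine Real.rpow_le_rpow (by positivity) ?_ hα
    push_cast
    linarith [one_le_pow₀ (M₀ := ℝ) one_le_two (n := n)]
  rw [lacunarySeq_two_pow, abs_of_pos (by positivity)]
  calc (2 : ℝ) ^ (-(2 * α) * n) * (1 + ((2 ^ n : ℕ) : ℝ)) ^ α
      ≤ (2 : ℝ) ^ (-(2 * α) * n) * (2 ^ α * (2 : ℝ) ^ (n * α)) :=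
        mul_le_mul_of_nonneg_left hweight (by positivity)
    _ = 2 ^ α * ((2 : ℝ) ^ (-α)) ^ n := by
      rw [← Real.rpow_mul_natCast zero_le_two, mul_left_comm, ← Real.rpow_add two_pos]
      ring_nf

theorem summable_abs_lacunarySeq_mul_rpow {α : ℝ} (hα : 0 < α) :
    Summable fun k : ℕ => |lacunarySeq α k| * (1 + (k : ℝ)) ^ α := by
  have hsupp :
      ∀ k ∉ Set.range (2 ^ · : ℕ → ℕ), |lacunarySeq α k| * (1 + (k : ℝ)) ^ α = 0 :=
    fun k hk => by rw [lacunarySeq_eq_zero_of_notMem_range α hk, abs_zero, zero_mul]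
  rw [← (Nat.pow_right_injective le_rfl).summable_iff hsupp]
  have hgeom : Summable fun n : ℕ => 2 ^ α * ((2 : ℝ) ^ (-α)) ^ n :=
    (summable_geometric_of_lt_one (by positivity)
      (Real.rpow_lt_one_of_one_lt_of_neg one_lt_two (neg_lt_zero.mpr hα))).mul_left _
  exact hgeom.of_nonneg_of_le (fun n => mul_nonneg (abs_nonneg _) (by positivity))
    (abs_lacunarySeq_two_pow_mul_le hα.le)

lemma dyadicPhi_succ_two_pow_succ (n : ℕ) : dyadicPhi (n + 1) (2 ^ (n + 1)) = 1 := by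
  have hlt : ¬ 2 ^ (n + 1) ≤ 2 ^ n := by
    rw [pow_succ]
    have := Nat.two_pow_pos n
    omega
  rw [dyadicPhi, if_neg n.succ_ne_zero, Nat.add_sub_cancel, if_neg hlt, if_pos le_rfl]
  push_cast
  rw [pow_succ]
  field_simp
  ring

lemma dyadicPhi_succ_two_pow_of_ne {n m : ℕ} (hm : m ≠ n + 1) :
    dyadicPhi (n + 1) (2 ^ m) = 0 := by
  rw [dyadicPhi, if_neg n.succ_ne_zero, Nat.add_sub_cancel]
  rcases Nat.lt_or_gt_of_ne hm with h | h
  · exact if_pos (Nat.pow_le_pow_right two_pos (by omega))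
  · have hlt : 2 ^ (n + 1 + 1) ≤ 2 ^ m := Nat.pow_le_pow_right two_pos h
    have h1 : 2 ^ n < 2 ^ (n + 1) := Nat.pow_lt_pow_right one_lt_two n.lt_succ_self
    have h2 : 2 ^ (n + 1) < 2 ^ (n + 1 + 1) := Nat.pow_lt_pow_right one_lt_two (n + 1).lt_succ_self
    rw [if_neg (by omega), if_neg (by omega)]
    split_ifs with hle
    · rw [show 2 ^ m = 2 ^ (n + 1 + 1) by omega]
      push_cast
      ring
    · rfl

lemma tsum_dyadicPhi_mul_lacunarySeq (α : ℝ) (n : ℕ) (z : ℂ) :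
    ∑' k : ℕ, (dyadicPhi (n + 1) k : ℂ) * (lacunarySeq α k : ℂ) * z ^ k
      = ((2 : ℝ) ^ (-(2 * α) * (n + 1 : ℕ)) : ℝ) * z ^ 2 ^ (n + 1) := by
  rw [tsum_eq_single (2 ^ (n + 1))]
  · rw [dyadicPhi_succ_two_pow_succ, lacunarySeq_two_pow]
    push_cast
    ring
  · intro k hk
    by_cases hpow : k ∈ Set.range (2 ^ · : ℕ → ℕ)
    · obtain ⟨m, rfl⟩ := hpow
      have hm : m ≠ n + 1 := fun h => hk (by rw [h])
      simp [dyadicPhi_succ_two_pow_of_ne hm]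
    · simp [lacunarySeq_eq_zero_of_notMem_range α hpow]

open scoped Pointwise in
lemma sSup_mul_norm_pow_of_norm_lt_one {𝕜 : Type*} [RCLike 𝕜] {c : ℝ} (hc : 0 ≤ c)
    {m : ℕ} (hm : m ≠ 0) :
    sSup {r : ℝ | ∃ z : 𝕜, ‖z‖ < 1 ∧ r = c * ‖z‖ ^ m} = c := by
  have hset :
      {r : ℝ | ∃ z : 𝕜, ‖z‖ < 1 ∧ r = c * ‖z‖ ^ m} = c • Set.Ico (0 : ℝ) 1 := by
    ext r
    constructor
    · rintro ⟨z, hz, rfl⟩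
      exact ⟨‖z‖ ^ m, ⟨by positivity, pow_lt_one₀ (norm_nonneg z) hz hm⟩, rfl⟩
    · rintro ⟨t, ⟨ht₀, ht₁⟩, rfl⟩
      have hroot : 0 ≤ t ^ (m⁻¹ : ℝ) := by positivity
      refine ⟨((t ^ (m⁻¹ : ℝ) : ℝ) : 𝕜), ?_, ?_⟩
      · rw [RCLike.norm_ofReal, abs_of_nonneg hroot]
        exact Real.rpow_lt_one ht₀ ht₁ (by positivity)
      · rw [RCLike.norm_ofReal, abs_of_nonneg hroot, Real.rpow_inv_natCast_pow ht₀ hm]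
        rfl
  rw [hset, Real.sSup_smul_of_nonneg hc, csSup_Ico zero_lt_one, smul_eq_mul, mul_one]

lemma two_rpow_mul_sSup_dyadicBlock_eq_one (α : ℝ) (n : ℕ) :
    (2 : ℝ) ^ (2 * α * (n + 1 : ℕ)) *
      sSup {r : ℝ | ∃ z : ℂ, ‖z‖ < 1 ∧
        r = ‖∑' k : ℕ, (dyadicPhi (n + 1) k : ℂ) * (lacunarySeq α k : ℂ) * z ^ k‖}
      = 1 := by
  have hc : 0 < (2 : ℝ) ^ (-(2 * α) * (n + 1 : ℕ)) := by positivity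
  simp_rw [tsum_dyadicPhi_mul_lacunarySeq, norm_mul, Complex.norm_real, Real.norm_eq_abs,
    abs_of_pos hc, norm_pow]
  rw [sSup_mul_norm_pow_of_norm_lt_one hc.le (by positivity), ← Real.rpow_add two_pos]
  simp

/-- **`A_α(𝔻)` is not contained in `B^{2α}_{∞,1}(𝔻)` (Remark 5.2).**
For `α > 0` the lacunary series `f(z) = Σ_n 2^{-2αn} z^{2^n}` has
`Σ_k |a_k|(1+k)^α < ∞` but infinite Besov norm
`Σ_n 2^{2αn} sup_{|z|<1} |Σ_k φ_n(k) a_k z^k| = ∞`. -/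
theorem weighted_wiener_not_in_besov (α : ℝ) (hα : 0 < α) :
    Summable (fun k : ℕ => |lacunarySeq α k| * (1 + (k : ℝ)) ^ α) ∧
    ¬ Summable (fun n : ℕ => (2 : ℝ) ^ (2 * α * (n : ℝ)) *
        sSup {r : ℝ | ∃ z : ℂ, ‖z‖ < 1 ∧
          r = ‖∑' k : ℕ,
                (dyadicPhi n k : ℂ) * (lacunarySeq α k : ℂ) * z ^ k‖}) := by
  refine ⟨summable_abs_lacunarySeq_mul_rpow hα, fun hsum => ?_⟩
  have hshift := (summable_nat_add_iff 1).mpr hsum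
  simp only [two_rpow_mul_sSup_dyadicBlock_eq_one] at hshift
  exact one_ne_zero ((summable_const_iff 1).mp hshift)
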